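/- Suppose θ > 0, T is an SPT of G rooted at s containing the edge e₀, and T̂ is an SPT of G' rooted at s. Let B₁ and B₂ be linked T̂-branches with miniroots x₁ and x₂, and suppose δ(x₁) = δ(x₂) = δ with 0 < δ < θ. Then x₁ is an ancestor of x₂ in T or x₂ is an ancestor of x₁ in T. Moreover, if x₁ is an ancestor of x₂ in T and, in addition, x₂ is an ancestor of x₁ in T̂, then G contains a 0-cycle. -/

import Mathlib

namespace DynSPT

variable {V : Type*}

/-- The list of consecutive edges of a path given as a list of vertices. -/
def edgeList (l : List V) : List (V × V) := l.zip l.tail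

/-- The length of a path with respect to the weight function `ω`. -/
def len (ω : V → V → ℝ) (l : List V) : ℝ :=
  ((edgeList l).map fun p => ω p.1 p.2).sum

/-- `l` is a path in the directed graph with edge relation `E`. -/
def IsWalk (E : V → V → Prop) (l : List V) : Prop := l ≠ [] ∧ l.Chain' E

/-- `l` is a path from `u` to `v` in the directed graph with edge relation `E`. -/
def IsWalkFrom (E : V → V → Prop) (l : List V) (u v : V) : Prop :=
  IsWalk E l ∧ l.head? = some u ∧ l.getLast? = some v

/-- The path `l` traverses the edge `e`. -/
def Traverses (l : List V) (e : V × V) : Prop := e ∈ edgeList l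

/-- `l` is a cycle: a path with at least one edge whose first and last vertices agree. -/
def IsCycle (E : V → V → Prop) (l : List V) : Prop :=
  ∃ v, IsWalkFrom E l v v ∧ 2 ≤ l.length

/-- The weighted directed graph `(E, ω)` has a negative cycle. -/
def HasNegCycle (E : V → V → Prop) (ω : V → V → ℝ) : Prop :=
  ∃ l, IsCycle E l ∧ len ω l < 0

/-- The weighted directed graph `(E, ω)` has a zero-length cycle. -/
def HasZeroCycle (E : V → V → Prop) (ω : V → V → ℝ) : Prop :=
  ∃ l, IsCycle E l ∧ len ω l = 0

/-- The distance from `s` to `v`: the infimum of the lengths of paths from `s` to `v`. -/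
noncomputable def dist (E : V → V → Prop) (ω : V → V → ℝ) (s v : V) : ℝ :=
  sInf {L : ℝ | ∃ l, IsWalkFrom E l s v ∧ len ω l = L}

/-- A spanning tree of the directed graph `E` rooted at `s`, recorded by the parent
function together with, for every vertex `v`, the tree path from `s` to `v`. -/
structure RootedTree (E : V → V → Prop) (s : V) where
  parent : V → V
  path : V → List V
  path_root : path s = [s]
  parent_edge : ∀ v, v ≠ s → E (parent v) v
  path_eq : ∀ v, v ≠ s → path v = path (parent v) ++ [v]
  path_isWalkFrom : ∀ v, IsWalkFrom E (path v) s v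

/-- `(a, b)` is an edge of the rooted tree `T`. -/
def RootedTree.IsEdge {E : V → V → Prop} {s : V} (T : RootedTree E s) (a b : V) : Prop :=
  b ≠ s ∧ T.parent b = a

/-- `T` is a shortest-path tree for the weight function `ω`:
every tree path from the root is a shortest path. -/
def IsSPT {E : V → V → Prop} {s : V} (ω : V → V → ℝ) (T : RootedTree E s) : Prop :=
  ∀ v, len ω (T.path v) = dist E ω s v

/-- The tree edge of `Th` into `v` is kept when forming `Th`-branches: it is an
edge of the old tree `T` and is not the modified edge `(x₀, y₀)`. -/
def Kept {E : V → V → Prop} {s : V} (T Th : RootedTree E s) (x₀ y₀ v : V) : Prop :=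
  v ≠ s ∧ T.IsEdge (Th.parent v) v ∧ (Th.parent v, v) ≠ (x₀, y₀)

/-- `v` belongs to the `Th`-branch with miniroot `m`: `m` is an ancestor of `v` in `Th`
and every tree edge on the segment of the tree path from `m` to `v` is kept. -/
def InBranch {E : V → V → Prop} {s : V} (T Th : RootedTree E s) (x₀ y₀ m v : V) : Prop :=
  ∃ l, Th.path v = Th.path m ++ l ∧ ∀ w ∈ l, Kept T Th x₀ y₀ w

/-- `m` is the miniroot of a `Th`-branch: the tree edge of `Th` into `m` is not kept
(in particular this holds for the root `s`). -/
def IsMiniroot {E : V → V → Prop} {s : V} (T Th : RootedTree E s) (x₀ y₀ m : V) : Prop :=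
  ¬ Kept T Th x₀ y₀ m


/-! ### Auxiliary lemmas -/

lemma mem_of_getLast?_eq {l : List V} {a : V} (h : l.getLast? = some a) : a ∈ l := by
  obtain ⟨h', rfl⟩ := List.mem_getLast?_eq_getLast h
  exact List.getLast_mem h'

lemma len_cons₂ (ω : V → V → ℝ) (a b : V) (l : List V) :
    len ω (a :: b :: l) = ω a b + len ω (b :: l) := by
  simp [len, edgeList]

lemma len_append (ω : V → V → ℝ) :
    ∀ (p : List V) (a : V) (l : List V), p.getLast? = some a →
    len ω (p ++ l) = len ω p + len ω (a :: l) := by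
  intro p
  induction p with
  | nil => intro a l h; simp at h
  | cons x p ih =>
    intro a l h
    cases p with
    | nil =>
      simp only [List.getLast?_singleton, Option.some.injEq] at h
      subst h
      show len ω (x :: l) = len ω [x] + len ω (x :: l)
      simp [len, edgeList]
    | cons y p' =>
      rw [List.getLast?_cons_cons] at h
      have hih := ih a l h
      simp only [List.cons_append] at hih ⊢
      rw [len_cons₂, len_cons₂, hih]
      ring

lemma len_le_len {ω ω' : V → V → ℝ} (hω : ∀ a b, ω a b ≤ ω' a b) (l : List V) :
    len ω l ≤ len ω' l :=
  List.sum_le_sum (fun p _ => hω p.1 p.2)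

variable {E : V → V → Prop} {s : V}

lemma RootedTree.path_ne_nil (T : RootedTree E s) (v : V) : T.path v ≠ [] :=
  (T.path_isWalkFrom v).1.1

lemma RootedTree.path_chain' (T : RootedTree E s) (v : V) : (T.path v).Chain' E :=
  (T.path_isWalkFrom v).1.2

lemma RootedTree.getLast?_path (T : RootedTree E s) (v : V) :
    (T.path v).getLast? = some v :=
  (T.path_isWalkFrom v).2.2

lemma RootedTree.mem_path_self (T : RootedTree E s) (v : V) : v ∈ T.path v :=
  mem_of_getLast?_eq (T.getLast?_path v)

lemma RootedTree.eq_of_path_eq (T : RootedTree E s) {u v : V}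
    (h : T.path u = T.path v) : u = v := by
  have h1 := T.getLast?_path u
  rw [h, T.getLast?_path v] at h1
  exact (Option.some.injEq _ _ ▸ h1).symm

/-- Decomposition of a tree path at any of its vertices. -/
lemma RootedTree.path_decomp (T : RootedTree E s) :
    ∀ (n : ℕ) (u : V), (T.path u).length ≤ n → ∀ v ∈ T.path u,
      ∃ l, T.path u = T.path v ++ l := by
  intro n
  induction n with
  | zero =>
    intro u h
    exact absurd (List.length_eq_zero_iff.1 (Nat.le_zero.1 h)) (T.path_ne_nil u)
  | succ n ih =>
    intro u hlen v hv
    by_cases hu : u = s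
    · subst hu
      rw [T.path_root] at hv ⊢
      simp only [List.mem_singleton] at hv
      subst hv
      exact ⟨[], by rw [T.path_root]; simp⟩
    · have heq := T.path_eq u hu
      rw [heq] at hv
      rcases List.mem_append.1 hv with h1 | h2
      · have hl : (T.path (T.parent u)).length ≤ n := by
          have : (T.path u).length = (T.path (T.parent u)).length + 1 := by
            rw [heq]; simp
          omega
        obtain ⟨l, hl'⟩ := ih (T.parent u) hl v h1
        exact ⟨l ++ [u], by rw [heq, hl', List.append_assoc]⟩
      · simp only [List.mem_singleton] at h2
        subst h2
        exact ⟨[], by simp⟩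

lemma RootedTree.path_decomp' (T : RootedTree E s) {u v : V} (hv : v ∈ T.path u) :
    ∃ l, T.path u = T.path v ++ l :=
  T.path_decomp (T.path u).length u le_rfl v hv

/-- Within a branch, the `Th`-path segment is also a `T`-path segment. -/
lemma branch_T_path (T Th : RootedTree E s) (x₀ y₀ : V) :
    ∀ (l : List V) (m u : V), Th.path u = Th.path m ++ l →
      (∀ w ∈ l, Kept T Th x₀ y₀ w) → T.path u = T.path m ++ l := by
  intro l
  induction l using List.reverseRecOn with
  | nil =>
    intro m u h _
    simp only [List.append_nil] at h
    rw [Th.eq_of_path_eq h]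
    simp
  | append_singleton l w ih =>
    intro m u h hk
    have huw : u = w := by
      have h1 := Th.getLast?_path u
      rw [h, ← List.append_assoc, List.getLast?_append_of_ne_nil _ (by simp)] at h1
      simpa using h1.symm
    subst huw
    obtain ⟨hus, ⟨_, hpar⟩, _⟩ := hk u (by simp)
    have hThu := Th.path_eq u hus
    rw [hThu, ← List.append_assoc] at h
    have hp : Th.path (Th.parent u) = Th.path m ++ l :=
      List.append_cancel_right h
    have ihp := ih m (Th.parent u) hp (fun w hw => hk w (by simp [hw]))
    rw [T.path_eq u hus, hpar, ihp, List.append_assoc]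

lemma mem_T_path_of_inBranch {T Th : RootedTree E s} {x₀ y₀ m u : V}
    (h : InBranch T Th x₀ y₀ m u) : m ∈ T.path u := by
  obtain ⟨l, hl, hk⟩ := h
  rw [branch_T_path T Th x₀ y₀ l m u hl hk]
  exact List.mem_append.2 (Or.inl (T.mem_path_self m))

/-- Helper for branch disjointness. -/
lemma miniroot_eq_of_prefix {T Th : RootedTree E s} {x₀ y₀ m₁ m₂ v : V} {l₁ : List V}
    (hpath : Th.path v = Th.path m₁ ++ l₁) (hk : ∀ w ∈ l₁, Kept T Th x₀ y₀ w)
    (hm₂ : IsMiniroot T Th x₀ y₀ m₂)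
    (hpre : Th.path m₁ <+: Th.path m₂) (hpre2 : Th.path m₂ <+: Th.path v) :
    m₁ = m₂ := by
  obtain ⟨t, ht⟩ := hpre
  obtain ⟨r, hr⟩ := hpre2
  have htr : t ++ r = l₁ := by
    apply List.append_cancel_left (as := Th.path m₁)
    rw [← List.append_assoc, ht, hr, hpath]
  cases t with
  | nil =>
    simp only [List.append_nil] at ht
    exact Th.eq_of_path_eq ht
  | cons a t' =>
    exfalso
    apply hm₂
    apply hk
    have h1 := Th.getLast?_path m₂
    rw [← ht, List.getLast?_append_of_ne_nil _ (by simp)] at h1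
    have : m₂ ∈ (a :: t') := mem_of_getLast?_eq h1
    rw [← htr]
    exact List.mem_append.2 (Or.inl this)

/-- Branches of distinct miniroots are disjoint. -/
lemma miniroot_unique {T Th : RootedTree E s} {x₀ y₀ m₁ m₂ v : V}
    (h1 : InBranch T Th x₀ y₀ m₁ v) (h2 : InBranch T Th x₀ y₀ m₂ v)
    (hm₁ : IsMiniroot T Th x₀ y₀ m₁) (hm₂ : IsMiniroot T Th x₀ y₀ m₂) :
    m₁ = m₂ := by
  obtain ⟨l₁, hl₁, hk₁⟩ := h1
  obtain ⟨l₂, hl₂, hk₂⟩ := h2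
  have p1 : Th.path m₁ <+: Th.path v := ⟨l₁, hl₁.symm⟩
  have p2 : Th.path m₂ <+: Th.path v := ⟨l₂, hl₂.symm⟩
  rcases List.prefix_or_prefix_of_prefix p1 p2 with h | h
  · exact miniroot_eq_of_prefix hl₁ hk₁ hm₂ h p2
  · exact (miniroot_eq_of_prefix hl₂ hk₂ hm₁ h p1).symm

/-- Core of Part 1: a linked `T`-edge forces the ancestor relation. -/
lemma mem_of_linked {T Th : RootedTree E s} {x₀ y₀ m₁ m₂ u₁ u₂ : V}
    (hm₁ : IsMiniroot T Th x₀ y₀ m₁) (hm₂ : IsMiniroot T Th x₀ y₀ m₂)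
    (hne : m₁ ≠ m₂) (hedge : T.IsEdge u₁ u₂)
    (hb₁ : InBranch T Th x₀ y₀ m₁ u₁) (hb₂ : InBranch T Th x₀ y₀ m₂ u₂) :
    m₁ ∈ T.path m₂ := by
  obtain ⟨hu₂s, hpar⟩ := hedge
  obtain ⟨l, hl, hk⟩ := hb₂
  rcases List.eq_nil_or_concat l with rfl | ⟨l₀, w, rfl⟩
  · -- u₂ = m₂
    simp only [List.append_nil] at hl
    have hum : u₂ = m₂ := Th.eq_of_path_eq hl
    subst hum
    have : T.path u₂ = T.path u₁ ++ [u₂] := by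
      rw [T.path_eq u₂ hu₂s, hpar]
    rw [this]
    exact List.mem_append.2 (Or.inl (mem_T_path_of_inBranch hb₁))
  · -- the Th-edge into u₂ is kept, so u₁ is in both branches: contradiction
    exfalso
    simp only [List.concat_eq_append] at hl hk
    have huw : u₂ = w := by
      have h1 := Th.getLast?_path u₂
      rw [hl, ← List.append_assoc, List.getLast?_append_of_ne_nil _ (by simp)] at h1
      simpa using h1.symm
    subst huw
    obtain ⟨hus, ⟨_, hpar'⟩, _⟩ := hk u₂ (by simp)
    have hThu := Th.path_eq u₂ hus
    rw [hThu, ← List.append_assoc] at hl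
    have hp : Th.path (Th.parent u₂) = Th.path m₂ ++ l₀ :=
      List.append_cancel_right hl
    have hpp : Th.parent u₂ = u₁ := by rw [← hpar, hpar']
    rw [hpp] at hp
    have hb₂' : InBranch T Th x₀ y₀ m₂ u₁ :=
      ⟨l₀, hp, fun w hw => hk w (by simp [hw])⟩
    exact hne (miniroot_unique hb₁ hb₂' hm₁ hm₂)

lemma chain'_joint {R : V → V → Prop} {A B : List V} {a : V}
    (h : List.Chain' R (A ++ B)) (ha : A.getLast? = some a) :
    List.Chain' R (a :: B) := by
  rw [List.Chain', List.isChain_append] at h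
  obtain ⟨-, hB, hjoin⟩ := h
  cases B with
  | nil => simp [List.Chain']
  | cons b B' =>
    exact List.isChain_cons_cons.2 ⟨hjoin a ha b rfl, hB⟩
theorem statement_7
    {V : Type*} [Fintype V] (E : V → V → Prop) (ω ω' : V → V → ℝ) (s x₀ y₀ : V)
    (hE₀ : E x₀ y₀)
    (hreach : ∀ v, ∃ l, IsWalkFrom E l s v)
    (hω' : ∀ a b, (a, b) ≠ (x₀, y₀) → ω' a b = ω a b)
    (hG : ¬ HasNegCycle E ω)
    (hθ : 0 < ω' x₀ y₀ - ω x₀ y₀)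
    (T Th : RootedTree E s) (hT : IsSPT ω T) (he₀ : T.IsEdge x₀ y₀)
    (hTh : IsSPT ω' Th)
    (m₁ m₂ : V)
    (hm₁ : IsMiniroot T Th x₀ y₀ m₁) (hm₂ : IsMiniroot T Th x₀ y₀ m₂)
    (hne : m₁ ≠ m₂)
    (hlinked : ∃ u₁ u₂, T.IsEdge u₁ u₂ ∧
      ((InBranch T Th x₀ y₀ m₁ u₁ ∧ InBranch T Th x₀ y₀ m₂ u₂) ∨
        (InBranch T Th x₀ y₀ m₂ u₁ ∧ InBranch T Th x₀ y₀ m₁ u₂)))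
    (δ : ℝ)
    (hδ₁ : dist E ω' s m₁ - dist E ω s m₁ = δ)
    (hδ₂ : dist E ω' s m₂ - dist E ω s m₂ = δ)
    (hδpos : 0 < δ) (hδθ : δ < ω' x₀ y₀ - ω x₀ y₀) :
    (m₁ ∈ T.path m₂ ∨ m₂ ∈ T.path m₁) ∧
      (m₁ ∈ T.path m₂ → m₂ ∈ Th.path m₁ → HasZeroCycle E ω) := by
  have hωle : ∀ a b, ω a b ≤ ω' a b := by
    intro a b
    by_cases h : (a, b) = (x₀, y₀)
    · rw [Prod.ext_iff] at h
      obtain ⟨rfl, rfl⟩ := h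
      linarith
    · rw [hω' a b h]
  obtain ⟨u₁, u₂, hedge, hcase⟩ := hlinked
  constructor
  · rcases hcase with ⟨hb₁, hb₂⟩ | ⟨hb₂, hb₁⟩
    · exact Or.inl (mem_of_linked hm₁ hm₂ hne hedge hb₁ hb₂)
    · exact Or.inr (mem_of_linked hm₂ hm₁ hne.symm hedge hb₂ hb₁)
  · intro h12 h21
    obtain ⟨l, hl⟩ := T.path_decomp' h12
    obtain ⟨l', hl'⟩ := Th.path_decomp' h21
    have hlne : l ≠ [] := by
      rintro rfl
      rw [List.append_nil] at hl
      exact hne (T.eq_of_path_eq hl).symm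
    have hl'ne : l' ≠ [] := by
      rintro rfl
      rw [List.append_nil] at hl'
      exact hne (Th.eq_of_path_eq hl')
    have hlast_l : l.getLast? = some m₂ := by
      have h := T.getLast?_path m₂
      rwa [hl, List.getLast?_append_of_ne_nil _ hlne] at h
    have hlast_l' : l'.getLast? = some m₁ := by
      have h := Th.getLast?_path m₁
      rwa [hl', List.getLast?_append_of_ne_nil _ hl'ne] at h
    have hlast_seg : (m₂ :: l').getLast? = some m₁ := by
      show ([m₂] ++ l').getLast? = some m₁
      rw [List.getLast?_append_of_ne_nil _ hl'ne, hlast_l']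
    set C : List V := (m₂ :: l') ++ l with hC
    have hchain1 : List.Chain' E (m₂ :: l') :=
      chain'_joint (by rw [← hl']; exact Th.path_chain' m₁) (Th.getLast?_path m₂)
    have hchain2 : List.Chain' E (m₁ :: l) :=
      chain'_joint (by rw [← hl]; exact T.path_chain' m₂) (T.getLast?_path m₁)
    have hchainC : List.Chain' E C := by
      rw [hC, List.Chain', List.isChain_append]
      refine ⟨hchain1, hchain2.tail, ?_⟩
      intro x hx y hy
      cases l with
      | nil => exact absurd hlne (by simp)
      | cons a rest =>
        have hxm : x = m₁ := by
          rw [hlast_seg] at hx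
          simp only [Option.mem_def, Option.some.injEq] at hx
          exact hx.symm
        have hya : y = a := by
          simp only [List.head?_cons, Option.mem_def, Option.some.injEq] at hy
          exact hy.symm
        subst hxm; subst hya
        exact (List.isChain_cons_cons.1 hchain2).1
    have hCcyc : IsCycle E C := by
      refine ⟨m₂, ⟨⟨by simp [hC], hchainC⟩, by simp [hC], ?_⟩, ?_⟩
      · rw [hC, List.getLast?_append_of_ne_nil _ hlne, hlast_l]
      · have : l.length ≠ 0 := fun h => hlne (List.length_eq_zero_iff.1 h)
        simp only [hC, List.length_append, List.length_cons]
        omega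
    have e1 : len ω' (Th.path m₁) = len ω' (Th.path m₂) + len ω' (m₂ :: l') := by
      rw [hl']; exact len_append ω' _ _ _ (Th.getLast?_path m₂)
    have e2 : len ω (T.path m₂) = len ω (T.path m₁) + len ω (m₁ :: l) := by
      rw [hl]; exact len_append ω _ _ _ (T.getLast?_path m₁)
    have e3 : len ω C = len ω (m₂ :: l') + len ω (m₁ :: l) :=
      len_append ω _ _ _ hlast_seg
    have e4 : len ω (m₂ :: l') ≤ len ω' (m₂ :: l') := len_le_len hωle _
    have hd1 := hT m₁
    have hd2 := hT m₂
    have hd3 := hTh m₁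
    have hd4 := hTh m₂
    have hle : len ω C ≤ 0 := by linarith
    rcases lt_or_eq_of_le hle with hlt | heq
    · exact absurd ⟨C, hCcyc, hlt⟩ hG
    · exact ⟨C, hCcyc, heq⟩


end DynSPT
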